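/- Let f be a convex function on ℝ^N, let w ∈ ℝ^N and r > 0, and suppose f is γ-strongly convex on the closed ball B(w, r) for some γ > 0. Assume f(w) ≤ min_{x ∈ B(w,r)} f(x) + ε for some ε ≤ r²γ/8. Then f admits a unique minimizer x⋆ over ℝ^N; x⋆ ∈ B(w, r) and ‖x⋆ − w‖² ≤ (2/γ)ε. Moreover, every x ∈ ℝ^N with f(x) ≤ min f + ε satisfies ‖x − w‖² ≤ (8/γ)ε. -/

import Mathlib

/-!
Let `z` minimize `f` over the compact ball `B(w, r)`. Strong convexity gives quadratic growth
`f z + (γ/2)‖y − z‖² ≤ f y` on the ball, so the near-optimality of `w` puts `z` within `r/2` of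
`w`, in the interior of the ball; a local minimum of a convex function is global. On the sphere
of radius `r/2` around `z` the growth is `γr²/8 ≥ ε`, so by convexity along rays from `z` every
point with `f x ≤ f z + ε` stays inside that sphere, where quadratic growth applies again and
also forces uniqueness of the minimizer.
-/

open Set Metric Filter Topology

theorem norm_sub_sq_le_two_mul {E : Type*} [SeminormedAddCommGroup E] (x y z : E) :
    ‖x - z‖ ^ 2 ≤ 2 * (‖x - y‖ ^ 2 + ‖y - z‖ ^ 2) :=
  (pow_le_pow_left₀ (norm_nonneg _) (norm_sub_le_norm_sub_add_norm_sub x y z) 2).trans add_sq_le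

section

variable {E : Type*} [NormedAddCommGroup E] [NormedSpace ℝ E] {s : Set E} {f : E → ℝ}

theorem StrongConvexOn.add_mul_sq_norm_sub_le_of_isMinOn {m : ℝ} (hf : StrongConvexOn s m f)
    {z y : E} (hmin : IsMinOn f s z) (hz : z ∈ s) (hy : y ∈ s) :
    f z + m / 2 * ‖y - z‖ ^ 2 ≤ f y := by
  have hsegment : ∀ t ∈ Ioo (0 : ℝ) 1, (1 - t) * (m / 2 * ‖y - z‖ ^ 2) ≤ f y - f z := by
    rintro t ⟨ht₀, ht₁⟩
    have hconv := hf.2 hy hz ht₀.le (by linarith) (add_sub_cancel t 1)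
    have hle : f z ≤ f _ := hmin (hf.1 hy hz ht₀.le (by linarith) (add_sub_cancel t 1))
    simp only [smul_eq_mul] at hconv
    refine le_of_mul_le_mul_left ?_ ht₀
    linarith
  have hlim : Tendsto (fun t : ℝ => (1 - t) * (m / 2 * ‖y - z‖ ^ 2)) (𝓝[>] 0)
      (𝓝 (m / 2 * ‖y - z‖ ^ 2)) :=
    tendsto_nhdsWithin_of_tendsto_nhds <| Continuous.tendsto' (by fun_prop) _ _ (by simp)
  linarith [le_of_tendsto hlim (eventually_of_mem (Ioo_mem_nhdsGT one_pos) hsegment)]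

theorem ConvexOn.norm_sub_le_of_add_le_on_sphere (hf : ConvexOn ℝ s f) {z x : E} {ρ δ : ℝ}
    (hz : z ∈ s) (hx : x ∈ s) (hρ : 0 ≤ ρ) (hδ : 0 < δ)
    (hsphere : ∀ y ∈ s, ‖y - z‖ = ρ → f z + δ ≤ f y) (hfx : f x ≤ f z + δ) :
    ‖x - z‖ ≤ ρ := by
  by_contra! hfar
  have hpos : 0 < ‖x - z‖ := hρ.trans_lt hfar
  set t := ρ / ‖x - z‖
  have ht₀ : 0 ≤ t := div_nonneg hρ hpos.le
  have ht₁ : t < 1 := (div_lt_one hpos).2 hfar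
  have hsum : 1 - t + t = 1 := sub_add_cancel 1 t
  set y := (1 - t) • z + t • x
  have hyz : ‖y - z‖ = ρ := by
    have : y - z = t • (x - z) := by module
    rw [this, norm_smul, Real.norm_of_nonneg ht₀, div_mul_cancel₀ ρ hpos.ne']
  have hy := hsphere y (hf.1 hz hx (by linarith) ht₀ hsum) hyz
  have hconv := hf.2 hz hx (by linarith) ht₀ hsum
  simp only [smul_eq_mul] at hconv
  nlinarith

theorem ConvexOn.norm_sub_le_of_quadratic_growth (hf : ConvexOn ℝ univ f) {z x : E} {ρ c : ℝ}
    (hρ : 0 < ρ) (hc : 0 < c) (hgrowth : ∀ y ∈ closedBall z ρ, f z + c * ‖y - z‖ ^ 2 ≤ f y)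
    (hfx : f x ≤ f z + c * ρ ^ 2) : ‖x - z‖ ≤ ρ := by
  refine hf.norm_sub_le_of_add_le_on_sphere (mem_univ z) (mem_univ x) hρ.le (by positivity)
    (fun y _ hy => ?_) hfx
  simpa only [hy] using hgrowth y (mem_closedBall_iff_norm.2 hy.le)

end

/-- Lemma (local strong convexity pins down the minimizer): if a convex
function f on ℝ^N is γ-strongly convex on the closed ball B(w, r) — that is,
x ↦ f(x) − (γ/2)‖x‖² is convex on B(w, r) — and w nearly minimizes f on
B(w, r), then f has a unique global minimizer x⋆, which lies in B(w, r) with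
‖x⋆ − w‖² ≤ (2/γ)ε, and every ε-approximate global minimizer x satisfies
‖x − w‖² ≤ (8/γ)ε. -/
theorem stmt19 (N : ℕ) (f : EuclideanSpace ℝ (Fin N) → ℝ)
    (hf : ConvexOn ℝ Set.univ f)
    (w : EuclideanSpace ℝ (Fin N)) (r γ ε : ℝ) (hr : 0 < r) (hγ : 0 < γ)
    (hsc : ConvexOn ℝ (Metric.closedBall w r) (fun x => f x - γ / 2 * ‖x‖ ^ 2))
    (hε : ε ≤ r ^ 2 * γ / 8)
    (hmin : f w ≤ sInf (f '' Metric.closedBall w r) + ε) :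
    ∃ xstar : EuclideanSpace ℝ (Fin N),
      IsMinOn f Set.univ xstar ∧
      (∀ y, IsMinOn f Set.univ y → y = xstar) ∧
      xstar ∈ Metric.closedBall w r ∧
      ‖xstar - w‖ ^ 2 ≤ (2 / γ) * ε ∧
      ∀ x, f x ≤ f xstar + ε → ‖x - w‖ ^ 2 ≤ (8 / γ) * ε := by
  obtain ⟨z, hzB, hsInf, hzmin⟩ := (isCompact_closedBall w r).exists_sInf_image_eq_and_le
    ⟨w, mem_closedBall_self hr.le⟩ ((hf.continuousOn isOpen_univ).mono (subset_univ _))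
  have hgrowth : ∀ y ∈ closedBall w r, f z + γ / 2 * ‖y - z‖ ^ 2 ≤ f y := fun y hy =>
    (strongConvexOn_iff_convex.2 hsc).add_mul_sq_norm_sub_le_of_isMinOn hzmin hzB hy
  have hclose : ∀ x ∈ closedBall w r, f x ≤ f z + ε → ‖x - z‖ ^ 2 ≤ 2 / γ * ε := by
    intro x hx hfx
    rw [div_mul_eq_mul_div, le_div_iff₀ hγ]
    nlinarith [hgrowth x hx]
  have hfw : f w ≤ f z + ε := hsInf ▸ hmin
  have hε₀ : 0 ≤ ε := by linarith [hzmin w (mem_closedBall_self hr.le)]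
  have hwz : ‖w - z‖ ^ 2 ≤ 2 / γ * ε := hclose w (mem_closedBall_self hr.le) hfw
  have hzw : dist z w ≤ r / 2 := by
    rw [dist_eq_norm, norm_sub_rev]
    refine le_of_pow_le_pow_left₀ two_ne_zero (by positivity) (hwz.trans ?_)
    rw [div_mul_eq_mul_div, div_le_iff₀ hγ]
    nlinarith
  have hball : closedBall z (r / 2) ⊆ closedBall w r := closedBall_subset_closedBall' (by linarith)
  have hglobal : ∀ x, f z ≤ f x := IsMinOn.of_isLocalMin_of_convex_univ
    ((isMinOn_iff.2 hzmin).isLocalMin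
      (mem_of_superset (closedBall_mem_nhds z (half_pos hr)) hball)) hf
  have hnear : ∀ x, f x ≤ f z + ε → x ∈ closedBall w r := fun x hfx =>
    hball <| mem_closedBall_iff_norm.2 <| hf.norm_sub_le_of_quadratic_growth (half_pos hr)
      (half_pos hγ) (fun y hy => hgrowth y (hball hy)) (by linarith)
  refine ⟨z, fun x _ => hglobal x, fun y hy => ?_, hzB, norm_sub_rev z w ▸ hwz, fun x hfx => ?_⟩
  · have hyz : f y ≤ f z := hy (mem_univ z)
    have : ‖y - z‖ ^ 2 ≤ 0 := by nlinarith [hgrowth y (hnear y (by linarith))]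
    simpa [sub_eq_zero] using this
  · have hxz := hclose x (hnear x hfx) hfx
    calc ‖x - w‖ ^ 2 ≤ 2 * (‖x - z‖ ^ 2 + ‖z - w‖ ^ 2) := norm_sub_sq_le_two_mul x z w
      _ ≤ 8 / γ * ε := by
        rw [norm_sub_rev z w]
        linarith [show 8 / γ * ε = 4 * (2 / γ * ε) by ring]
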